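/- arXiv:1608.06956 — 5 statements merged into one kernel-verified Lean document; each statement's English description precedes it below -/
import Mathlib

section
/- Suppose M is 2ε-left interleaved with N (there is a short exact sequence 0 → M → N → X → 0 with t^{2ε}X = 0) and P is 2ε-left interleaved with N (short exact sequence 0 → P → N → Y → 0 with t^{2ε}Y = 0). Then M and P are 2ε-interleaved. -/
/-- A `ℤ`-graded `k[t]`-module, i.e. a persistence module over `ℤ`. -/
structure PersMod (k : Type*) [Field k] where
  V : ℤ → Type*
  [grp : ∀ j, AddCommGroup (V j)]
  [mod : ∀ j, Module k (V j)]
  map : ∀ {i j : ℤ}, i ≤ j → (V i →ₗ[k] V j)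
  map_id : ∀ i : ℤ, map (le_refl i) = LinearMap.id
  map_comp : ∀ {i j l : ℤ} (hij : i ≤ j) (hjl : j ≤ l),
    (map hjl).comp (map hij) = map (hij.trans hjl)

attribute [instance] PersMod.grp PersMod.mod

variable {k : Type*} [Field k]

/-- An `ε`-morphism of persistence modules (raises degree by `ε`). -/
structure EHom (M N : PersMod k) (ε : ℕ) where
  f : ∀ j : ℤ, M.V j →ₗ[k] N.V (j + ε)
  natural : ∀ {i j : ℤ} (h : i ≤ j),
    (f j).comp (M.map h) = (N.map (by omega : (i : ℤ) + (ε : ℤ) ≤ j + (ε : ℤ))).comp (f i)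

/-- An `ε`-interleaving: a pair of `ε`-morphisms whose composites in both
orders are multiplication by `t^{2ε}` (the structure maps shifting by `2ε`). -/
structure Interleaving (M N : PersMod k) (ε : ℕ) where
  φ : EHom M N ε
  ψ : EHom N M ε
  comp_φψ : ∀ j : ℤ, (ψ.f (j + ε)).comp (φ.f j)
      = M.map (by omega : (j : ℤ) ≤ j + (ε : ℤ) + (ε : ℤ))
  comp_ψφ : ∀ j : ℤ, (φ.f (j + ε)).comp (ψ.f j)
      = N.map (by omega : (j : ℤ) ≤ j + (ε : ℤ) + (ε : ℤ))

/-- `t^{2ε} · M = 0`. -/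
def IsTrivial (M : PersMod k) (ε : ℕ) : Prop :=
  ∀ j : ℤ, (M.map (by omega : (j : ℤ) ≤ j + 2 * (ε : ℤ))) = 0

/-- A degree-preserving morphism of persistence modules. -/
structure Hom0 (M N : PersMod k) where
  f : ∀ j : ℤ, M.V j →ₗ[k] N.V j
  natural : ∀ {i j : ℤ} (h : i ≤ j), (f j).comp (M.map h) = (N.map h).comp (f i)

/-- `0 → M → N → P → 0` is a short exact sequence of degree-preserving morphisms. -/
def IsShortExact {M N P : PersMod k} (f : Hom0 M N) (g : Hom0 N P) : Prop :=
  (∀ j : ℤ, Function.Injective (f.f j)) ∧ (∀ j : ℤ, Function.Surjective (g.f j)) ∧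
    ∀ j : ℤ, LinearMap.range (f.f j) = LinearMap.ker (g.f j)

/-- The zero persistence module. -/
def zeroPM : PersMod k where
  V _ := PUnit
  map _ := 0
  map_id _ := LinearMap.ext fun _ => rfl
  map_comp _ _ := LinearMap.ext fun _ => rfl

/-- Lift construction: if `t^{2ε}` kills `N/P`, then `t^{2ε} · (f₁ m)` factors
through `f₂`, giving an `EHom M P (2ε)` compatible with the inclusions. -/
noncomputable def liftE (M N P Y : PersMod k) (ε : ℕ)
    (f₁ : Hom0 M N) (f₂ : Hom0 P N) (g₂ : Hom0 N Y)
    (h₂ : IsShortExact f₂ g₂) (hY : IsTrivial Y ε) :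
    { φ : EHom M P (2 * ε) //
      ∀ (j : ℤ) (m : M.V j),
        f₂.f (j + ((2 * ε : ℕ) : ℤ)) (φ.f j m)
          = N.map (by omega : (j : ℤ) ≤ j + ((2 * ε : ℕ) : ℤ)) (f₁.f j m) } := by
  have hmem : ∀ (j : ℤ) (n : N.V j),
      N.map (by omega : (j : ℤ) ≤ j + ((2 * ε : ℕ) : ℤ)) n
        ∈ LinearMap.range (f₂.f (j + ((2 * ε : ℕ) : ℤ))) := by
    intro j n
    rw [h₂.2.2]
    show g₂.f _ (N.map _ n) = 0
    have h1 := LinearMap.congr_fun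
      (g₂.natural (by omega : (j : ℤ) ≤ j + ((2 * ε : ℕ) : ℤ))) n
    simp only [LinearMap.comp_apply] at h1
    rw [h1]
    have h0 : Y.map (by omega : (j : ℤ) ≤ j + ((2 * ε : ℕ) : ℤ))
        = (0 : Y.V j →ₗ[k] Y.V (j + ((2 * ε : ℕ) : ℤ))) := hY j
    rw [h0]; rfl
  let e : ∀ j : ℤ, P.V j ≃ₗ[k] LinearMap.range (f₂.f j) :=
    fun j => LinearEquiv.ofInjective (f₂.f j) (h₂.1 j)
  let F : ∀ j : ℤ, M.V j →ₗ[k] P.V (j + ((2 * ε : ℕ) : ℤ)) := fun j =>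
    (e (j + ((2 * ε : ℕ) : ℤ))).symm.toLinearMap.comp
      (LinearMap.codRestrict _
        ((N.map (by omega : (j : ℤ) ≤ j + ((2 * ε : ℕ) : ℤ))).comp (f₁.f j))
        (fun m => hmem j (f₁.f j m)))
  have hF : ∀ (j : ℤ) (m : M.V j),
      f₂.f (j + ((2 * ε : ℕ) : ℤ)) (F j m)
        = N.map (by omega : (j : ℤ) ≤ j + ((2 * ε : ℕ) : ℤ)) (f₁.f j m) := by
    intro j m
    have := (e (j + ((2 * ε : ℕ) : ℤ))).apply_symm_apply
      ⟨N.map (by omega : (j : ℤ) ≤ j + ((2 * ε : ℕ) : ℤ)) (f₁.f j m),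
        hmem j (f₁.f j m)⟩
    exact congrArg Subtype.val this
  refine ⟨⟨F, ?_⟩, hF⟩
  intro i j h
  apply LinearMap.ext; intro m
  apply h₂.1 (j + ((2 * ε : ℕ) : ℤ))
  simp only [LinearMap.comp_apply]
  rw [hF j (M.map h m)]
  have hf₂ := LinearMap.congr_fun
    (f₂.natural (by omega : (i : ℤ) + ((2 * ε : ℕ) : ℤ) ≤ j + ((2 * ε : ℕ) : ℤ))) (F i m)
  simp only [LinearMap.comp_apply] at hf₂
  rw [hf₂, hF i m]
  have hf₁ := LinearMap.congr_fun (f₁.natural h) m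
  simp only [LinearMap.comp_apply] at hf₁
  rw [hf₁]
  have c1 := LinearMap.congr_fun
    (N.map_comp h (by omega : (j : ℤ) ≤ j + ((2 * ε : ℕ) : ℤ))) (f₁.f i m)
  have c2 := LinearMap.congr_fun
    (N.map_comp (by omega : (i : ℤ) ≤ i + ((2 * ε : ℕ) : ℤ))
      (by omega : (i : ℤ) + ((2 * ε : ℕ) : ℤ) ≤ j + ((2 * ε : ℕ) : ℤ))) (f₁.f i m)
  simp only [LinearMap.comp_apply] at c1 c2
  rw [c1, c2]

/-- If `M ⊑_{2ε} N` and `P ⊑_{2ε} N` (both left interleaved with `N`), then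
`M` and `P` are `2ε`-interleaved. -/
theorem left_left_into (M N P X Y : PersMod k) (ε : ℕ)
    (f₁ : Hom0 M N) (g₁ : Hom0 N X) (h₁ : IsShortExact f₁ g₁) (hX : IsTrivial X ε)
    (f₂ : Hom0 P N) (g₂ : Hom0 N Y) (h₂ : IsShortExact f₂ g₂) (hY : IsTrivial Y ε) :
    Nonempty (Interleaving M P (2 * ε)) := by
  obtain ⟨φ, hφ⟩ := liftE M N P Y ε f₁ f₂ g₂ h₂ hY
  obtain ⟨ψ, hψ⟩ := liftE P N M X ε f₂ f₁ g₁ h₁ hX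
  refine ⟨⟨φ, ψ, ?_, ?_⟩⟩
  · intro j
    apply LinearMap.ext; intro m
    apply h₁.1 (j + ((2 * ε : ℕ) : ℤ) + ((2 * ε : ℕ) : ℤ))
    simp only [LinearMap.comp_apply]
    rw [hψ _ (φ.f j m), hφ j m]
    have c2 := LinearMap.congr_fun
      (N.map_comp (by omega : (j : ℤ) ≤ j + ((2 * ε : ℕ) : ℤ))
        (by omega : (j : ℤ) + ((2 * ε : ℕ) : ℤ)
          ≤ j + ((2 * ε : ℕ) : ℤ) + ((2 * ε : ℕ) : ℤ))) (f₁.f j m)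
    simp only [LinearMap.comp_apply] at c2
    rw [c2]
    have hf₁ := LinearMap.congr_fun
      (f₁.natural (by omega : (j : ℤ)
        ≤ j + ((2 * ε : ℕ) : ℤ) + ((2 * ε : ℕ) : ℤ))) m
    simp only [LinearMap.comp_apply] at hf₁
    rw [hf₁]
  · intro j
    apply LinearMap.ext; intro n
    apply h₂.1 (j + ((2 * ε : ℕ) : ℤ) + ((2 * ε : ℕ) : ℤ))
    simp only [LinearMap.comp_apply]
    rw [hφ _ (ψ.f j n), hψ j n]
    have c2 := LinearMap.congr_fun
      (N.map_comp (by omega : (j : ℤ) ≤ j + ((2 * ε : ℕ) : ℤ))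
        (by omega : (j : ℤ) + ((2 * ε : ℕ) : ℤ)
          ≤ j + ((2 * ε : ℕ) : ℤ) + ((2 * ε : ℕ) : ℤ))) (f₂.f j n)
    simp only [LinearMap.comp_apply] at c2
    rw [c2]
    have hf₂ := LinearMap.congr_fun
      (f₂.natural (by omega : (j : ℤ)
        ≤ j + ((2 * ε : ℕ) : ℤ) + ((2 * ε : ℕ) : ℤ))) n
    simp only [LinearMap.comp_apply] at hf₂
    rw [hf₂]
end

section
/- Suppose M is 2ε-right interleaved with N via the short exact sequence 0 → X → M → N → 0 with t^{2ε}X = 0, and P is 2ε-right interleaved with N via 0 → Y → P → N → 0 with t^{2ε}Y = 0. Then M and P are 2ε-interleaved. -/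
variable {k : Type*} [Field k]

section Lift

variable {A B C : Type*} [AddCommGroup A] [AddCommGroup B] [AddCommGroup C]
  [Module k A] [Module k B] [Module k C]

/-- Lift a linear map along a surjection whose kernel it kills. -/
noncomputable def liftSurj (g : A →ₗ[k] B) (hg : Function.Surjective g) (q : A →ₗ[k] C)
    (hk : LinearMap.ker g ≤ LinearMap.ker q) : B →ₗ[k] C :=
  ((LinearMap.ker g).liftQ q hk).comp
    (LinearMap.quotKerEquivOfSurjective g hg).symm.toLinearMap

lemma liftSurj_apply (g : A →ₗ[k] B) (hg : Function.Surjective g) (q : A →ₗ[k] C)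
    (hk : LinearMap.ker g ≤ LinearMap.ker q) (a : A) :
    liftSurj g hg q hk (g a) = q a := by
  have h1 : (LinearMap.quotKerEquivOfSurjective g hg).symm (g a)
      = Submodule.Quotient.mk a := by
    rw [LinearEquiv.symm_apply_eq]
    simp only [LinearMap.quotKerEquivOfSurjective, LinearMap.quotKerEquivRange,
      LinearEquiv.ofTop, LinearEquiv.trans_apply]
    rfl
  simp [liftSurj, h1]

end Lift

/-- Transport `map = 0` along an equality of endpoints. -/
lemma map_eq_zero_of (X : PersMod k) {i j j' : ℤ} (h : i ≤ j) (h' : i ≤ j')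
    (e : j = j') (hz : X.map h = 0) : X.map h' = 0 := by subst e; exact hz

/-- Pointwise composition law. -/
lemma pm_comp (M : PersMod k) {i j l : ℤ} (hij : i ≤ j) (hjl : j ≤ l) (x : M.V i) :
    M.map hjl (M.map hij x) = M.map (hij.trans hjl) x :=
  LinearMap.congr_fun (M.map_comp hij hjl) x

/-- If `M ⊒_{2ε} N` and `P ⊒_{2ε} N` (both right interleaved onto `N`), then
`M` and `P` are `2ε`-interleaved. -/
theorem right_right_onto (M N P X Y : PersMod k) (ε : ℕ)
    (f₁ : Hom0 X M) (g₁ : Hom0 M N) (h₁ : IsShortExact f₁ g₁) (hX : IsTrivial X ε)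
    (f₂ : Hom0 Y P) (g₂ : Hom0 P N) (h₂ : IsShortExact f₂ g₂) (hY : IsTrivial Y ε) :
    Nonempty (Interleaving M P (2 * ε)) := by
  classical
  set d : ℤ := ((2 * ε : ℕ) : ℤ) with hd
  have hX' : ∀ j : ℤ, X.map (show (j : ℤ) ≤ j + d by omega) = 0 := fun j =>
    map_eq_zero_of X _ _ (by rw [hd]; push_cast; ring) (hX j)
  have hY' : ∀ j : ℤ, Y.map (show (j : ℤ) ≤ j + d by omega) = 0 := fun j =>
    map_eq_zero_of Y _ _ (by rw [hd]; push_cast; ring) (hY j)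
  -- kernel conditions
  have kerM : ∀ j : ℤ, LinearMap.ker (g₁.f j)
      ≤ LinearMap.ker (M.map (show (j : ℤ) ≤ j + d by omega)) := by
    intro j x hx
    rw [LinearMap.mem_ker] at hx ⊢
    have hr : x ∈ LinearMap.range (f₁.f j) := by rw [h₁.2.2 j]; exact hx
    obtain ⟨y, rfl⟩ := hr
    have hn := LinearMap.congr_fun
      (f₁.natural (show (j : ℤ) ≤ j + d by omega)) y
    simp only [LinearMap.coe_comp, Function.comp_apply] at hn
    rw [← hn, hX' j]
    simp
  have kerP : ∀ j : ℤ, LinearMap.ker (g₂.f j)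
      ≤ LinearMap.ker (P.map (show (j : ℤ) ≤ j + d by omega)) := by
    intro j x hx
    rw [LinearMap.mem_ker] at hx ⊢
    have hr : x ∈ LinearMap.range (f₂.f j) := by rw [h₂.2.2 j]; exact hx
    obtain ⟨y, rfl⟩ := hr
    have hn := LinearMap.congr_fun
      (f₂.natural (show (j : ℤ) ≤ j + d by omega)) y
    simp only [LinearMap.coe_comp, Function.comp_apply] at hn
    rw [← hn, hY' j]
    simp
  -- the lifts
  let hP : ∀ j : ℤ, N.V j →ₗ[k] P.V (j + d) := fun j =>
    liftSurj (g₂.f j) (h₂.2.1 j) (P.map (show (j : ℤ) ≤ j + d by omega)) (kerP j)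
  let hM : ∀ j : ℤ, N.V j →ₗ[k] M.V (j + d) := fun j =>
    liftSurj (g₁.f j) (h₁.2.1 j) (M.map (show (j : ℤ) ≤ j + d by omega)) (kerM j)
  have hP_apply : ∀ (j : ℤ) (p : P.V j),
      hP j (g₂.f j p) = P.map (show (j : ℤ) ≤ j + d by omega) p := fun j p =>
    liftSurj_apply _ _ _ _ p
  have hM_apply : ∀ (j : ℤ) (m : M.V j),
      hM j (g₁.f j m) = M.map (show (j : ℤ) ≤ j + d by omega) m := fun j m =>
    liftSurj_apply _ _ _ _ m
  -- key : g composed with the lift is the structure map of N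
  have gP : ∀ (j : ℤ) (n : N.V j),
      g₂.f (j + d) (hP j n) = N.map (show (j : ℤ) ≤ j + d by omega) n := by
    intro j n
    obtain ⟨p, rfl⟩ := h₂.2.1 j n
    rw [hP_apply]
    have := LinearMap.congr_fun (g₂.natural (show (j : ℤ) ≤ j + d by omega)) p
    simpa using this
  have gM : ∀ (j : ℤ) (n : N.V j),
      g₁.f (j + d) (hM j n) = N.map (show (j : ℤ) ≤ j + d by omega) n := by
    intro j n
    obtain ⟨m, rfl⟩ := h₁.2.1 j n
    rw [hM_apply]
    have := LinearMap.congr_fun (g₁.natural (show (j : ℤ) ≤ j + d by omega)) m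
    simpa using this
  -- naturality of the lifts
  have hP_nat : ∀ {i j : ℤ} (h : i ≤ j) (n : N.V i),
      hP j (N.map h n) = P.map (show (i : ℤ) + d ≤ j + d by omega) (hP i n) := by
    intro i j h n
    obtain ⟨p, rfl⟩ := h₂.2.1 i n
    have h1 := LinearMap.congr_fun (g₂.natural h) p
    simp only [LinearMap.coe_comp, Function.comp_apply] at h1
    rw [← h1, hP_apply, hP_apply, pm_comp, pm_comp]
  have hM_nat : ∀ {i j : ℤ} (h : i ≤ j) (n : N.V i),
      hM j (N.map h n) = M.map (show (i : ℤ) + d ≤ j + d by omega) (hM i n) := by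
    intro i j h n
    obtain ⟨m, rfl⟩ := h₁.2.1 i n
    have h1 := LinearMap.congr_fun (g₁.natural h) m
    simp only [LinearMap.coe_comp, Function.comp_apply] at h1
    rw [← h1, hM_apply, hM_apply, pm_comp, pm_comp]
  refine ⟨{
    φ := { f := fun j => (hP j).comp (g₁.f j), natural := ?_ }
    ψ := { f := fun j => (hM j).comp (g₂.f j), natural := ?_ }
    comp_φψ := ?_
    comp_ψφ := ?_ }⟩
  · intro i j h
    ext m
    simp only [LinearMap.coe_comp, Function.comp_apply]
    have h1 := LinearMap.congr_fun (g₁.natural h) m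
    simp only [LinearMap.coe_comp, Function.comp_apply] at h1
    rw [h1, hP_nat]
  · intro i j h
    ext p
    simp only [LinearMap.coe_comp, Function.comp_apply]
    have h1 := LinearMap.congr_fun (g₂.natural h) p
    simp only [LinearMap.coe_comp, Function.comp_apply] at h1
    rw [h1, hM_nat]
  · intro j
    ext m
    simp only [LinearMap.coe_comp, Function.comp_apply]
    rw [gP, show N.map (show (j : ℤ) ≤ j + d by omega) (g₁.f j m)
        = g₁.f (j + d) (M.map (show (j : ℤ) ≤ j + d by omega) m) from
      (LinearMap.congr_fun (g₁.natural (show (j : ℤ) ≤ j + d by omega)) m).symm,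
      hM_apply, pm_comp]
  · intro j
    ext p
    simp only [LinearMap.coe_comp, Function.comp_apply]
    rw [gM, show N.map (show (j : ℤ) ≤ j + d by omega) (g₂.f j p)
        = g₂.f (j + d) (P.map (show (j : ℤ) ≤ j + d by omega) p) from
      (LinearMap.congr_fun (g₂.natural (show (j : ℤ) ≤ j + d by omega)) p).symm,
      hP_apply, pm_comp]
end

section
/- Suppose N is 2ε-left interleaved with both M and P: there are short exact sequences 0 → N → M → X → 0 and 0 → N → P → Y → 0 with t^{2ε}X = 0 and t^{2ε}Y = 0. Then M and P are 2ε-interleaved. -/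
variable {k : Type*} [Field k]

/- ### Auxiliary machinery -/

/-- Lift through an injective linear map. -/
noncomputable def liftHom {A B C : Type*} [AddCommGroup A] [AddCommGroup B] [AddCommGroup C]
    [Module k A] [Module k B] [Module k C] (f : A →ₗ[k] B) (hf : Function.Injective f)
    (g : C →ₗ[k] B) (hg : ∀ c, g c ∈ LinearMap.range f) : C →ₗ[k] A :=
  (LinearEquiv.ofInjective f hf).symm.toLinearMap ∘ₗ g.codRestrict (LinearMap.range f) hg

lemma liftHom_spec {A B C : Type*} [AddCommGroup A] [AddCommGroup B] [AddCommGroup C]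
    [Module k A] [Module k B] [Module k C] (f : A →ₗ[k] B) (hf : Function.Injective f)
    (g : C →ₗ[k] B) (hg : ∀ c, g c ∈ LinearMap.range f) (c : C) :
    f (liftHom f hf g hg c) = g c := by
  simp [liftHom, LinearEquiv.ofInjective_symm_apply]

/-- If `t^{2ε}·X = 0` then any structure map of `X` spanning at least `2ε` vanishes. -/
lemma trivial_map_zero {X : PersMod k} {ε : ℕ} (hX : IsTrivial X ε) {i j : ℤ}
    (hij : i ≤ j) (h2 : i + 2 * (ε : ℤ) ≤ j) : X.map hij = 0 := by
  have h1 : i ≤ i + 2 * (ε : ℤ) := by omega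
  have hc := X.map_comp h1 h2
  rw [show X.map hij = X.map (h1.trans h2) from rfl, ← hc, hX i]
  simp

section Lift

variable (N M X : PersMod k) (ε : ℕ)
  (f : Hom0 N M) (g : Hom0 M X) (h : IsShortExact f g) (hX : IsTrivial X ε)

include h hX in
lemma mem_range_of_trivial (j : ℤ) (m : M.V j) :
    M.map (by push_cast; omega : (j : ℤ) ≤ j + ((2 * ε : ℕ) : ℤ)) m
      ∈ LinearMap.range (f.f (j + ((2 * ε : ℕ) : ℤ))) := by
  rw [h.2.2, LinearMap.mem_ker]
  have hnat := g.natural (by push_cast; omega : (j : ℤ) ≤ j + ((2 * ε : ℕ) : ℤ))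
  have hz : X.map (by push_cast; omega : (j : ℤ) ≤ j + ((2 * ε : ℕ) : ℤ)) = 0 :=
    trivial_map_zero hX _ (by push_cast; omega)
  have := LinearMap.congr_fun hnat m
  simp only [LinearMap.comp_apply] at this
  rw [this, hz]
  simp

include h hX in
/-- Lifting the `2ε`-structure map of `M` through `f : N → M`. -/
noncomputable def lam (j : ℤ) : M.V j →ₗ[k] N.V (j + ((2 * ε : ℕ) : ℤ)) :=
  liftHom (f.f (j + ((2 * ε : ℕ) : ℤ))) (h.1 _)
    (M.map (by push_cast; omega : (j : ℤ) ≤ j + ((2 * ε : ℕ) : ℤ)))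
    (mem_range_of_trivial N M X ε f g h hX j)

include h hX in
lemma lam_spec (j : ℤ) (m : M.V j) :
    f.f (j + ((2 * ε : ℕ) : ℤ)) (lam N M X ε f g h hX j m)
      = M.map (by push_cast; omega : (j : ℤ) ≤ j + ((2 * ε : ℕ) : ℤ)) m :=
  liftHom_spec _ _ _ _ m

include h hX in
lemma lam_unique {j : ℤ} {m : M.V j} {n : N.V (j + ((2 * ε : ℕ) : ℤ))}
    (hn : f.f (j + ((2 * ε : ℕ) : ℤ)) n
      = M.map (by push_cast; omega : (j : ℤ) ≤ j + ((2 * ε : ℕ) : ℤ)) m) :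
    lam N M X ε f g h hX j m = n := by
  apply h.1
  rw [lam_spec, hn]

end Lift

/-- If `N ⊑_{2ε} M` and `N ⊑_{2ε} P` (`N` left interleaved with both), then
`M` and `P` are `2ε`-interleaved. -/
theorem left_left_outof (M N P X Y : PersMod k) (ε : ℕ)
    (f₁ : Hom0 N M) (g₁ : Hom0 M X) (h₁ : IsShortExact f₁ g₁) (hX : IsTrivial X ε)
    (f₂ : Hom0 N P) (g₂ : Hom0 P Y) (h₂ : IsShortExact f₂ g₂) (hY : IsTrivial Y ε) :
    Nonempty (Interleaving M P (2 * ε)) := by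
  set c : ℤ := ((2 * ε : ℕ) : ℤ) with hc
  -- the lifts
  set L₁ := lam N M X ε f₁ g₁ h₁ hX with hL₁
  set L₂ := lam N P Y ε f₂ g₂ h₂ hY with hL₂
  refine ⟨⟨⟨fun j => (f₂.f (j + c)) ∘ₗ L₁ j, ?_⟩, ⟨fun j => (f₁.f (j + c)) ∘ₗ L₂ j, ?_⟩, ?_, ?_⟩⟩
  · -- naturality of φ
    intro i j hij
    apply LinearMap.ext; intro m
    have key : L₁ j (M.map hij m)
        = N.map (by omega : i + c ≤ j + c) (L₁ i m) := by
      apply h₁.1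
      rw [lam_spec]
      have h1 := LinearMap.congr_fun (f₁.natural (by omega : i + c ≤ j + c)) (L₁ i m)
      simp only [LinearMap.comp_apply] at h1
      rw [h1, lam_spec]
      have h2 := LinearMap.congr_fun
        (M.map_comp hij (by push_cast; omega : (j : ℤ) ≤ j + c)) m
      have h3 := LinearMap.congr_fun
        (M.map_comp (by push_cast; omega : (i : ℤ) ≤ i + c) (by omega : i + c ≤ j + c)) m
      simp only [LinearMap.comp_apply] at h2 h3
      rw [h2, h3]
    simp only [LinearMap.comp_apply, key]
    have := LinearMap.congr_fun (f₂.natural (by omega : i + c ≤ j + c)) (L₁ i m)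
    simp only [LinearMap.comp_apply] at this
    rw [this]
  · -- naturality of ψ
    intro i j hij
    apply LinearMap.ext; intro m
    have key : L₂ j (P.map hij m)
        = N.map (by omega : i + c ≤ j + c) (L₂ i m) := by
      apply h₂.1
      rw [lam_spec]
      have h1 := LinearMap.congr_fun (f₂.natural (by omega : i + c ≤ j + c)) (L₂ i m)
      simp only [LinearMap.comp_apply] at h1
      rw [h1, lam_spec]
      have h2 := LinearMap.congr_fun
        (P.map_comp hij (by push_cast; omega : (j : ℤ) ≤ j + c)) m
      have h3 := LinearMap.congr_fun
        (P.map_comp (by push_cast; omega : (i : ℤ) ≤ i + c) (by omega : i + c ≤ j + c)) m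
      simp only [LinearMap.comp_apply] at h2 h3
      rw [h2, h3]
    simp only [LinearMap.comp_apply, key]
    have := LinearMap.congr_fun (f₁.natural (by omega : i + c ≤ j + c)) (L₂ i m)
    simp only [LinearMap.comp_apply] at this
    rw [this]
  · -- ψ ∘ φ = t^{2·2ε} on M
    intro j
    apply LinearMap.ext; intro m
    simp only [LinearMap.comp_apply]
    have key : L₂ (j + c) (f₂.f (j + c) (L₁ j m))
        = N.map (by omega : j + c ≤ j + c + c) (L₁ j m) := by
      apply h₂.1
      rw [lam_spec]
      have h1 := LinearMap.congr_fun
        (f₂.natural (by omega : j + c ≤ j + c + c)) (L₁ j m)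
      simp only [LinearMap.comp_apply] at h1
      rw [h1]
    rw [key]
    have h1 := LinearMap.congr_fun
      (f₁.natural (by omega : j + c ≤ j + c + c)) (L₁ j m)
    simp only [LinearMap.comp_apply] at h1
    rw [h1, lam_spec]
    have h2 := LinearMap.congr_fun
      (M.map_comp (by push_cast; omega : (j : ℤ) ≤ j + c) (by omega : j + c ≤ j + c + c)) m
    simp only [LinearMap.comp_apply] at h2
    rw [h2]
  · -- φ ∘ ψ = t^{2·2ε} on P
    intro j
    apply LinearMap.ext; intro m
    simp only [LinearMap.comp_apply]
    have key : L₁ (j + c) (f₁.f (j + c) (L₂ j m))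
        = N.map (by omega : j + c ≤ j + c + c) (L₂ j m) := by
      apply h₁.1
      rw [lam_spec]
      have h1 := LinearMap.congr_fun
        (f₁.natural (by omega : j + c ≤ j + c + c)) (L₂ j m)
      simp only [LinearMap.comp_apply] at h1
      rw [h1]
    rw [key]
    have h1 := LinearMap.congr_fun
      (f₂.natural (by omega : j + c ≤ j + c + c)) (L₂ j m)
    simp only [LinearMap.comp_apply] at h1
    rw [h1, lam_spec]
    have h2 := LinearMap.congr_fun
      (P.map_comp (by push_cast; omega : (j : ℤ) ≤ j + c) (by omega : j + c ≤ j + c + c)) m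
    simp only [LinearMap.comp_apply] at h2
    rw [h2]
end

section
/- Suppose N is 2ε-right interleaved with both M and P: there are short exact sequences 0 → X → N → M → 0 and 0 → Y → N → P → 0 with t^{2ε}X = 0 and t^{2ε}Y = 0. Then M and P are 2ε-interleaved. -/
variable {k : Type*} [Field k]

lemma kill_aux {W N : PersMod k} {Q : PersMod k} {ε : ℕ}
    (f : Hom0 W N) (g : Hom0 N Q)
    (hex : ∀ j : ℤ, LinearMap.range (f.f j) = LinearMap.ker (g.f j))
    (hW : IsTrivial W ε) {i j : ℤ} (h : i ≤ j) (hgap : i + 2 * (ε : ℤ) ≤ j)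
    (n : N.V i) (hn : g.f i n = 0) : N.map h n = 0 := by
  have hmem : n ∈ LinearMap.range (f.f i) := by rw [hex i]; exact LinearMap.mem_ker.mpr hn
  obtain ⟨x, hx⟩ := hmem
  have h1 : i ≤ i + 2 * (ε : ℤ) := by omega
  have step : N.map h1 n = 0 := by
    rw [← hx, ← LinearMap.comp_apply, ← f.natural h1, LinearMap.comp_apply, hW i]
    simp
  calc N.map h n = N.map hgap (N.map h1 n) :=
        (LinearMap.congr_fun (N.map_comp h1 hgap) n).symm
    _ = 0 := by rw [step]; simp

lemma diff_kill {W N : PersMod k} {Q : PersMod k} {ε : ℕ}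
    (f : Hom0 W N) (g : Hom0 N Q)
    (hex : ∀ j : ℤ, LinearMap.range (f.f j) = LinearMap.ker (g.f j))
    (hW : IsTrivial W ε) {i j : ℤ} (h : i ≤ j) (hgap : i + 2 * (ε : ℤ) ≤ j)
    (n n' : N.V i) (hn : g.f i n = g.f i n') : N.map h n = N.map h n' := by
  have : g.f i (n - n') = 0 := by rw [map_sub, hn, sub_self]
  have h0 := kill_aux f g hex hW h hgap (n - n') this
  rw [map_sub, sub_eq_zero] at h0
  exact h0

/-- If `N ⊒_{2ε} M` and `N ⊒_{2ε} P` (`N` right interleaved onto both), then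
`M` and `P` are `2ε`-interleaved. -/
theorem right_right_outof (M N P X Y : PersMod k) (ε : ℕ)
    (f₁ : Hom0 X N) (g₁ : Hom0 N M) (h₁ : IsShortExact f₁ g₁) (hX : IsTrivial X ε)
    (f₂ : Hom0 Y N) (g₂ : Hom0 N P) (h₂ : IsShortExact f₂ g₂) (hY : IsTrivial Y ε) :
    Nonempty (Interleaving M P (2 * ε)) := by
  classical
  obtain ⟨hinj₁, hsurj₁, hex₁⟩ := h₁
  obtain ⟨hinj₂, hsurj₂, hex₂⟩ := h₂
  choose s₁ hs₁ using fun j => (g₁.f j).exists_rightInverse_of_surjective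
    (LinearMap.range_eq_top.mpr (hsurj₁ j))
  choose s₂ hs₂ using fun j => (g₂.f j).exists_rightInverse_of_surjective
    (LinearMap.range_eq_top.mpr (hsurj₂ j))
  have hs₁' : ∀ (j : ℤ) (m : M.V j), g₁.f j (s₁ j m) = m :=
    fun j m => LinearMap.congr_fun (hs₁ j) m
  have hs₂' : ∀ (j : ℤ) (p : P.V j), g₂.f j (s₂ j p) = p :=
    fun j p => LinearMap.congr_fun (hs₂ j) p
  have le1 : ∀ j : ℤ, j ≤ j + ((2 * ε : ℕ) : ℤ) := fun j => by omega
  have gnat₁ : ∀ {i j : ℤ} (h : i ≤ j) (n : N.V i),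
      g₁.f j (N.map h n) = M.map h (g₁.f i n) :=
    fun h n => LinearMap.congr_fun (g₁.natural h) n
  have gnat₂ : ∀ {i j : ℤ} (h : i ≤ j) (n : N.V i),
      g₂.f j (N.map h n) = P.map h (g₂.f i n) :=
    fun h n => LinearMap.congr_fun (g₂.natural h) n
  have Ncomp : ∀ {i j l : ℤ} (h1 : i ≤ j) (h2 : j ≤ l) (n : N.V i),
      N.map h2 (N.map h1 n) = N.map (h1.trans h2) n :=
    fun h1 h2 n => LinearMap.congr_fun (N.map_comp h1 h2) n
  refine ⟨⟨⟨fun j => (g₂.f (j + ((2 * ε : ℕ) : ℤ))).comp ((N.map (le1 j)).comp (s₁ j)), ?_⟩,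
          ⟨fun j => (g₁.f (j + ((2 * ε : ℕ) : ℤ))).comp ((N.map (le1 j)).comp (s₂ j)), ?_⟩,
          ?_, ?_⟩⟩
  · intro i j h
    apply LinearMap.ext; intro m
    simp only [LinearMap.comp_apply]
    have hh : i + ((2 * ε : ℕ) : ℤ) ≤ j + ((2 * ε : ℕ) : ℤ) := by omega
    rw [← gnat₂ hh, Ncomp (le1 i) hh, ← Ncomp h (le1 j)]
    refine congrArg _ (diff_kill f₁ g₁ hex₁ hX (le1 j) (by omega) _ _ ?_)
    rw [hs₁', gnat₁ h, hs₁']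
  · intro i j h
    apply LinearMap.ext; intro p
    simp only [LinearMap.comp_apply]
    have hh : i + ((2 * ε : ℕ) : ℤ) ≤ j + ((2 * ε : ℕ) : ℤ) := by omega
    rw [← gnat₁ hh, Ncomp (le1 i) hh, ← Ncomp h (le1 j)]
    refine congrArg _ (diff_kill f₂ g₂ hex₂ hY (le1 j) (by omega) _ _ ?_)
    rw [hs₂', gnat₂ h, hs₂']
  · intro j
    apply LinearMap.ext; intro m
    simp only [LinearMap.comp_apply]
    rw [diff_kill f₂ g₂ hex₂ hY (le1 _) (by omega) _ _ (hs₂' _ _),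
      Ncomp (le1 j) (le1 _), gnat₁, hs₁']
  · intro j
    apply LinearMap.ext; intro p
    simp only [LinearMap.comp_apply]
    rw [diff_kill f₁ g₁ hex₁ hX (le1 _) (by omega) _ _ (hs₁' _ _),
      Ncomp (le1 j) (le1 _), gnat₂, hs₂']
end

section
/- Left and right interleavings do not add: suppose there are short exact sequences 0 → M → N → X → 0 and 0 → Y → N → P → 0 of Z-graded k[t]-modules with t^{2ε}X = 0 and t^{2ε}Y = 0 (i.e., M ⊑_{2ε} N and N ⊒_{2ε} P). Then M and P are 2ε-interleaved, with interleaving maps φ(m) = t^{2ε}·g(i(m)) and ψ([n]) = t^{2ε}·n where i: M → N is the inclusion and g: N → P the quotient map. -/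
variable {k : Type*} [Field k]

lemma pm_map_map (M : PersMod k) {a b c : ℤ} (h1 : a ≤ b) (h2 : b ≤ c) (x : M.V a) :
    M.map h2 (M.map h1 x) = M.map (h1.trans h2) x :=
  LinearMap.congr_fun (M.map_comp h1 h2) x

lemma hom0_nat {M N : PersMod k} (φ : Hom0 M N) {a b : ℤ} (h : a ≤ b) (x : M.V a) :
    φ.f b (M.map h x) = N.map h (φ.f a x) :=
  LinearMap.congr_fun (φ.natural h) x

/-- If `M ⊑_{2ε} N` (via `0 → M → N → X → 0`, `t^{2ε}X = 0`) and
`N ⊒_{2ε} P` (via `0 → Y → N → P → 0`, `t^{2ε}Y = 0`), then `M` and `P` are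
`2ε`-interleaved. -/
theorem left_then_right (M N P X Y : PersMod k) (ε : ℕ)
    (i : Hom0 M N) (f : Hom0 N X) (h₁ : IsShortExact i f) (hX : IsTrivial X ε)
    (j : Hom0 Y N) (g : Hom0 N P) (h₂ : IsShortExact j g) (hY : IsTrivial Y ε) :
    Nonempty (Interleaving M P (2 * ε)) := by
  obtain ⟨inj_i, surj_f, rng_i⟩ := h₁
  obtain ⟨inj_j, surj_g, rng_g⟩ := h₂
  set D : ℤ := ((2 * ε : ℕ) : ℤ) with hDdef
  have hDe : 2 * (ε : ℤ) = D := by rw [hDdef]; push_cast; ring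
  have hX' : ∀ {a b : ℤ} (h : a ≤ b), b = a + 2 * (ε : ℤ) → X.map h = 0 := by
    rintro a b h rfl; exact hX a
  have hY' : ∀ {a b : ℤ} (h : a ≤ b), b = a + 2 * (ε : ℤ) → Y.map h = 0 := by
    rintro a b h rfl; exact hY a
  -- membership: t^D n lands in range i
  have hmem : ∀ (a : ℤ) (n : N.V a),
      N.map (show a ≤ a + D by omega) n ∈ LinearMap.range (i.f (a + D)) := by
    intro a n
    rw [rng_i, LinearMap.mem_ker, hom0_nat f (show a ≤ a + D by omega) n, hX' _ (by omega)]
    rfl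
  let hmap : ∀ a : ℤ, N.V a →ₗ[k] M.V (a + D) := fun a =>
    (LinearEquiv.ofInjective (i.f (a + D)) (inj_i (a + D))).symm.toLinearMap ∘ₗ
      LinearMap.codRestrict (LinearMap.range (i.f (a + D)))
        (N.map (show a ≤ a + D by omega)) (hmem a)
  have hmap_spec : ∀ (a : ℤ) (n : N.V a),
      i.f (a + D) (hmap a n) = N.map (show a ≤ a + D by omega) n := by
    intro a n
    have h1 := (LinearEquiv.ofInjective (i.f (a + D)) (inj_i (a + D))).apply_symm_apply
      ⟨N.map (show a ≤ a + D by omega) n, hmem a n⟩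
    have h2 := congrArg Subtype.val h1
    rw [LinearEquiv.ofInjective_apply] at h2
    exact h2
  have hmap_zero : ∀ (a : ℤ) (n : N.V a), g.f a n = 0 → hmap a n = 0 := by
    intro a n hn
    apply inj_i (a + D)
    rw [hmap_spec, map_zero]
    have hn' : n ∈ LinearMap.range (j.f a) := by rw [rng_g]; exact hn
    obtain ⟨y, rfl⟩ := hn'
    rw [← hom0_nat j (show a ≤ a + D by omega) y, hY' _ (by omega)]
    simp
  have hker : ∀ a : ℤ, LinearMap.ker (g.f a) ≤ LinearMap.ker (hmap a) :=
    fun a n hn => hmap_zero a n hn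
  let ψf : ∀ a : ℤ, P.V a →ₗ[k] M.V (a + D) := fun a =>
    (Submodule.liftQ _ (hmap a) (hker a)) ∘ₗ
      ((g.f a).quotKerEquivOfSurjective (surj_g a)).symm.toLinearMap
  have ψ_spec : ∀ (a : ℤ) (n : N.V a), ψf a (g.f a n) = hmap a n := by
    intro a n
    have h1 : ((g.f a).quotKerEquivOfSurjective (surj_g a)).symm (g.f a n)
        = Submodule.Quotient.mk n := by
      apply ((g.f a).quotKerEquivOfSurjective (surj_g a)).injective
      rw [LinearEquiv.apply_symm_apply]
      rfl
    show (Submodule.liftQ _ (hmap a) (hker a))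
      (((g.f a).quotKerEquivOfSurjective (surj_g a)).symm (g.f a n)) = hmap a n
    rw [h1, Submodule.liftQ_apply]
  have hmap_nat : ∀ {a b : ℤ} (h : a ≤ b) (n : N.V a),
      hmap b (N.map h n) = M.map (show a + D ≤ b + D by omega) (hmap a n) := by
    intro a b h n
    apply inj_i (b + D)
    rw [hmap_spec, hom0_nat i (show a + D ≤ b + D by omega) (hmap a n), hmap_spec,
      pm_map_map, pm_map_map]
  refine ⟨⟨⟨fun a => (g.f (a + D)) ∘ₗ (N.map (show a ≤ a + D by omega)) ∘ₗ (i.f a), ?_⟩,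
    ⟨ψf, ?_⟩, ?_, ?_⟩⟩
  · intro a b h
    ext m
    simp only [LinearMap.coe_comp, Function.comp_apply]
    rw [hom0_nat i h m, pm_map_map,
      ← pm_map_map N (show a ≤ a + D by omega) (show a + D ≤ b + D by omega),
      hom0_nat g (show a + D ≤ b + D by omega)]
  · intro a b h
    ext p
    obtain ⟨n, rfl⟩ := surj_g a p
    simp only [LinearMap.coe_comp, Function.comp_apply]
    rw [← hom0_nat g h n, ψ_spec, ψ_spec, hmap_nat h n]
  · intro a
    ext m
    simp only [LinearMap.coe_comp, Function.comp_apply]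
    rw [ψ_spec]
    apply inj_i
    rw [hmap_spec, pm_map_map, hom0_nat i (show a ≤ a + D + D by omega) m]
  · intro a
    ext p
    obtain ⟨n, rfl⟩ := surj_g a p
    simp only [LinearMap.coe_comp, Function.comp_apply]
    rw [ψ_spec, hmap_spec, pm_map_map, hom0_nat g (show a ≤ a + D + D by omega) n]
end
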